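/- Let c be a positive integer, let χ be a Dirichlet character mod c with conductor c⋆, and let h be a positive integer. Then | ∑_{1 ≤ d ≤ c, gcd(d,c)=1} conj(χ(d)) e(h d / c) | ≤ (c⋆)^{1/2} · τ(h) · gcd(h, c), where τ(h) denotes the number of positive divisors of h. -/

import Mathlib

/-!
Let `ψ` be the inverse of the primitive character inducing `χ`, of level `N = c⋆`, so that
`conj χ(d) = ψ(d)` for `(d, c) = 1`. Möbius inversion over `t ∣ (d, c)` turns the sum into
`∑_{t ∣ c} μ(t) ψ(t) ∑_{m mod c/t} ψ(m) e(hm / (c/t))`. Only `t` coprime to `N` contribute,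
and then `c/t = N r`; the inner sum vanishes unless `r ∣ h`, in which case it is `r` times a
Gauss sum of the primitive character `ψ`, of absolute value `√N`. The surviving `r = c/(tN)`
are distinct common divisors of `h` and `c`: at most `τ(h)` of them, each at most `(h, c)`.
-/

open Finset

/-- `e(x) = exp(2πi x)`. -/
noncomputable def eC (x : ℝ) : ℂ := Complex.exp (2 * Real.pi * Complex.I * x)

open ArithmeticFunction DirichletCharacter
open scoped ArithmeticFunction.Moebius

lemma eC_add (x y : ℝ) : eC (x + y) = eC x * eC y := by
  simp only [eC, ← Complex.exp_add]
  push_cast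
  ring_nf

lemma eC_natCast (n : ℕ) : eC n = 1 := by
  rw [eC, ← Complex.exp_int_mul_two_pi_mul_I n]
  push_cast
  ring_nf

lemma eC_natCast_div (q j : ℕ) [NeZero q] : eC (j / q) = ZMod.stdAddChar (j : ZMod q) := by
  rw [ZMod.stdAddChar_apply, ZMod.toCircle_natCast, eC]
  push_cast
  ring_nf

section Reindexing

variable {M : Type*}

lemma sum_range_eq_sum_zmod [AddCommMonoid M] (q : ℕ) [NeZero q] (f : ZMod q → M) :
    ∑ m ∈ range q, f m = ∑ x : ZMod q, f x :=
  sum_nbij' (↑) ZMod.val (fun _ _ => mem_univ _) (fun x _ => mem_range.mpr x.val_lt)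
    (fun _ hm => ZMod.val_natCast_of_lt (mem_range.mp hm)) (fun x _ => ZMod.natCast_zmod_val x)
    (fun _ _ => rfl)

lemma sum_range_mul [AddCommMonoid M] (f : ℕ → M) (N r : ℕ) :
    ∑ m ∈ range (N * r), f m = ∑ b ∈ range r, ∑ a ∈ range N, f (N * b + a) := by
  induction r with
  | zero => simp
  | succ r ih => rw [mul_add_one, sum_range_add, ih, sum_range_succ]

lemma sum_range_mul_filter_dvd [AddCommMonoid M] (f : ℕ → M) {t : ℕ} (ht : t ≠ 0)
    (q : ℕ) : ∑ d ∈ range (t * q) with t ∣ d, f d = ∑ m ∈ range q, f (t * m) := by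
  rw [sum_filter, sum_range_mul]
  refine sum_congr rfl fun b _ => ?_
  rw [sum_eq_single_of_mem 0 (mem_range.mpr (Nat.pos_of_ne_zero ht)), add_zero,
    if_pos (dvd_mul_right t b)]
  intro a ha ha0
  rw [if_neg (by rwa [Nat.dvd_add_right (dvd_mul_right t b), Nat.dvd_iff_mod_eq_zero,
    Nat.mod_eq_of_lt (mem_range.mp ha)])]

lemma sum_Icc_one_eq_sum_range [AddCommGroup M] {f : ℕ → M} (c : ℕ) (hf : f c = f 0) :
    ∑ d ∈ Icc 1 c, f d = ∑ d ∈ range c, f d := by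
  have h := sum_range_succ f c
  rw [sum_range_succ', hf, add_left_inj] at h
  rw [← Ico_add_one_right_eq_Icc, sum_Ico_eq_sum_range, Nat.add_sub_cancel, ← h]
  simp only [add_comm]

end Reindexing

lemma sum_range_eC_mul_div (r n : ℕ) [NeZero r] :
    ∑ b ∈ range r, eC ((n * b : ℕ) / r) = if r ∣ n then (r : ℂ) else 0 := by
  simp_rw [eC_natCast_div, Nat.cast_mul, mul_comm (n : ZMod r)]
  rw [sum_range_eq_sum_zmod r (fun x => ZMod.stdAddChar (x * (n : ZMod r))),
    AddChar.sum_mulShift _ (ZMod.isPrimitive_stdAddChar r)]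
  simp [ZMod.natCast_eq_zero_iff, ZMod.card]

section GaussSum

variable {N : ℕ} [NeZero N]

lemma conj_gaussSum_stdAddChar (χ : DirichletCharacter ℂ N) :
    starRingEnd ℂ (gaussSum χ ZMod.stdAddChar)
      = gaussSum χ⁻¹ (ZMod.stdAddChar.mulShift (-1)) := by
  simp only [gaussSum, map_sum, map_mul, starRingEnd_apply, MulChar.star_apply',
    AddChar.mulShift_apply, neg_one_mul, AddChar.map_neg_eq_conj]

-- Fourier inversion `𝓕 (𝓕 χ) = N χ(-·)` at `1`, where `𝓕 χ = τ(χ) χ⁻¹(-·)` and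
-- `𝓕 χ⁻¹ = τ(χ⁻¹) χ(-·)` by primitivity.
lemma gaussSum_mul_gaussSum_inv {χ : DirichletCharacter ℂ N} (hχ : χ.IsPrimitive) :
    gaussSum χ ZMod.stdAddChar * gaussSum χ⁻¹ ZMod.stdAddChar = χ (-1) * N := by
  have hχinv : χ⁻¹.IsPrimitive := by rwa [isPrimitive_def, conductor_inv]
  have inversion := congrFun (ZMod.dft_dft (χ : ZMod N → ℂ)) 1
  rw [funext hχ.fourierTransform_eq_inv_mul_gaussSum, ZMod.dft_mul_const, ZMod.dft_comp_neg]
    at inversion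
  beta_reduce at inversion
  rw [hχinv.fourierTransform_eq_inv_mul_gaussSum, inv_inv, neg_neg, map_one, one_mul,
    smul_eq_mul] at inversion
  rw [mul_comm, inversion, mul_comm]

lemma norm_gaussSum_stdAddChar {χ : DirichletCharacter ℂ N} (hχ : χ.IsPrimitive) :
    ‖gaussSum χ ZMod.stdAddChar‖ = √N := by
  have hχinv : χ⁻¹.IsPrimitive := by rwa [isPrimitive_def, conductor_inv]
  have hsq : (‖gaussSum χ ZMod.stdAddChar‖ ^ 2 : ℂ) = N := by
    rw [← Complex.mul_conj', conj_gaussSum_stdAddChar, gaussSum_mulShift_of_isPrimitive _ hχinv,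
      inv_inv, mul_left_comm, gaussSum_mul_gaussSum_inv hχ, ← mul_assoc, ← map_mul,
      neg_one_mul, neg_neg, map_one, one_mul]
  rw [← Real.sqrt_sq (norm_nonneg _)]
  exact congrArg Real.sqrt (by exact_mod_cast hsq)

lemma norm_gaussSum_mulShift_le {χ : DirichletCharacter ℂ N} (hχ : χ.IsPrimitive)
    (a : ZMod N) : ‖gaussSum χ (ZMod.stdAddChar.mulShift a)‖ ≤ √N := by
  rw [gaussSum_mulShift_of_isPrimitive _ hχ, norm_mul, norm_gaussSum_stdAddChar hχ]
  exact mul_le_of_le_one_left (Real.sqrt_nonneg _) (χ⁻¹.norm_le_one a)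

end GaussSum

section TwistedSum

variable {N : ℕ} [NeZero N]

noncomputable def twistedSum (ψ : DirichletCharacter ℂ N) (q n : ℕ) : ℂ :=
  ∑ m ∈ range q, ψ m * eC ((n * m : ℕ) / q)

lemma twistedSum_mul (ψ : DirichletCharacter ℂ N) (r n : ℕ) [NeZero r] :
    twistedSum ψ (N * r) n =
      if r ∣ n then r * gaussSum ψ (ZMod.stdAddChar.mulShift (n / r : ℕ)) else 0 := by
  have hN : (N : ℝ) ≠ 0 := NeZero.ne _
  have hr : (r : ℝ) ≠ 0 := NeZero.ne _
  have split (a b : ℕ) :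
      ψ ((N * b + a : ℕ) : ZMod N) * eC ((n * (N * b + a) : ℕ) / (N * r : ℕ))
        = ψ a * eC ((n * a : ℕ) / (N * r : ℕ)) * eC ((n * b : ℕ) / r) := by
    rw [mul_assoc, ← eC_add]
    push_cast
    rw [ZMod.natCast_self, zero_mul, zero_add]
    congr 2
    field_simp
    ring
  rw [twistedSum, sum_range_mul]
  simp_rw [split]
  rw [sum_comm, ← sum_mul_sum, sum_range_eC_mul_div]
  split_ifs with hrn
  · obtain ⟨m, rfl⟩ := hrn
    have hgauss (a : ℕ) :
        eC ((r * m * a : ℕ) / (N * r : ℕ)) = ZMod.stdAddChar ((m * a : ℕ) : ZMod N) := by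
      rw [← eC_natCast_div]
      congr 1
      push_cast
      field_simp
    simp_rw [hgauss, Nat.mul_div_cancel_left m (Nat.pos_of_ne_zero (NeZero.ne r)), gaussSum,
      AddChar.mulShift_apply, Nat.cast_mul]
    rw [sum_range_eq_sum_zmod N (fun x => ψ x * ZMod.stdAddChar ((m : ZMod N) * x)), mul_comm]
  · rw [mul_zero]

lemma norm_twistedSum_mul_le {ψ : DirichletCharacter ℂ N} (hψ : ψ.IsPrimitive) (r n : ℕ)
    [NeZero r] : ‖twistedSum ψ (N * r) n‖ ≤ if r ∣ n then r * √N else 0 := by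
  rw [twistedSum_mul]
  split_ifs
  · rw [norm_mul, Complex.norm_natCast]
    gcongr
    exact norm_gaussSum_mulShift_le hψ _
  · rw [norm_zero]

/- Only the `t` coprime to `N` survive, and for those `c / t = N * (c / (t * N))`. -/
lemma norm_apply_mul_twistedSum_div_le {c : ℕ} {ψ : DirichletCharacter ℂ N}
    (hψ : ψ.IsPrimitive) (hNc : N ∣ c) {t : ℕ} (ht : t ∈ c.divisors) (h : ℕ) :
    ‖ψ t * twistedSum ψ (c / t) h‖
      ≤ if t * N ∣ c ∧ c / (t * N) ∣ h then (c / (t * N) : ℕ) * √N else 0 := by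
  by_cases htN : t.Coprime N
  · obtain ⟨r, rfl⟩ := htN.mul_dvd_of_dvd_of_dvd (Nat.dvd_of_mem_divisors ht) hNc
    have htNr : t * N * r ≠ 0 := (Nat.mem_divisors.mp ht).2
    have : NeZero r := ⟨right_ne_zero_of_mul htNr⟩
    have ht0 : 0 < t := Nat.pos_of_ne_zero (left_ne_zero_of_mul (left_ne_zero_of_mul htNr))
    rw [mul_assoc, Nat.mul_div_cancel_left _ ht0, ← mul_assoc,
      Nat.mul_div_cancel_left _ (Nat.pos_of_ne_zero (left_ne_zero_of_mul htNr)),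
      if_congr (and_iff_right (dvd_mul_right _ _)) rfl rfl, norm_mul]
    exact mul_le_of_le_one_left (norm_nonneg _) (ψ.norm_le_one _) |>.trans
      (norm_twistedSum_mul_le hψ r h)
  · rw [MulChar.map_nonunit ψ (by rwa [ZMod.isUnit_iff_coprime]), zero_mul, norm_zero]
    split_ifs <;> positivity

end TwistedSum

lemma sum_divisors_moebius {R : Type*} [Ring R] (n : ℕ) :
    ∑ t ∈ n.divisors, (μ t : R) = if n = 1 then 1 else 0 := by
  have h := coe_mul_zeta_apply (f := (μ : ArithmeticFunction R)) (x := n)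
  rw [coe_moebius_mul_coe_zeta, one_apply] at h
  simpa using h.symm

lemma sum_range_ite_coprime {R : Type*} [Ring R] {c : ℕ} (hc : c ≠ 0) (F : ℕ → R) :
    ∑ d ∈ range c, (if d.Coprime c then F d else 0)
      = ∑ t ∈ c.divisors, μ t * ∑ m ∈ range (c / t), F (t * m) := by
  have hindicator (d : ℕ) :
      (if d.Coprime c then F d else 0) = ∑ t ∈ c.divisors with t ∣ d, μ t * F d := by
    have hdiv : {t ∈ c.divisors | t ∣ d} = (d.gcd c).divisors := by
      ext t
      simp [Nat.dvd_gcd_iff, hc, Nat.gcd_ne_zero_right hc, and_comm]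
    rw [← sum_mul, hdiv, sum_divisors_moebius]
    simp [← Nat.coprime_iff_gcd_eq_one]
  simp_rw [hindicator, sum_filter]
  rw [sum_comm]
  refine sum_congr rfl fun t ht => ?_
  obtain ⟨q, rfl⟩ := Nat.dvd_of_mem_divisors ht
  have ht0 : t ≠ 0 := (Nat.pos_of_mem_divisors ht).ne'
  rw [← sum_filter, sum_range_mul_filter_dvd _ ht0, mul_sum,
    Nat.mul_div_cancel_left q (Nat.pos_of_ne_zero ht0)]

lemma conj_apply_natCast {c : ℕ} (χ : DirichletCharacter ℂ c) (d : ℕ) :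
    starRingEnd ℂ (χ d) = if d.Coprime c then χ.primitiveCharacter⁻¹ d else 0 := by
  rw [starRingEnd_apply, MulChar.star_apply']
  nth_rewrite 1 [← changeLevel_primitiveCharacter χ]
  rw [← map_inv]
  split_ifs with hd
  · exact_mod_cast changeLevel_eq_cast_of_dvd' _ _ (Nat.isCoprime_iff_coprime.mpr hd)
  · exact MulChar.map_nonunit _ (by rwa [ZMod.isUnit_iff_coprime])

lemma sum_coprime_conj_mul_eC {c : ℕ} (hc : c ≠ 0) (χ : DirichletCharacter ℂ c) (h : ℕ) :
    ∑ d ∈ Icc 1 c with d.Coprime c, starRingEnd ℂ (χ d) * eC ((h * d : ℕ) / c)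
      = ∑ t ∈ c.divisors, μ t *
          (χ.primitiveCharacter⁻¹ t * twistedSum χ.primitiveCharacter⁻¹ (c / t) h) := by
  have hcoprime (d : ℕ) (_ : d ∈ Icc 1 c)
      (hd : starRingEnd ℂ (χ d) * eC ((h * d : ℕ) / c) ≠ 0) : d.Coprime c := by
    by_contra hdc
    rw [MulChar.map_nonunit χ (by rwa [ZMod.isUnit_iff_coprime]), _root_.map_zero, zero_mul] at hd
    exact hd rfl
  have hperiodic : starRingEnd ℂ (χ c) * eC ((h * c : ℕ) / c)
      = starRingEnd ℂ (χ (0 : ℕ)) * eC ((h * 0 : ℕ) / c) := by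
    rw [Nat.cast_mul, mul_div_cancel_right₀ _ (Nat.cast_ne_zero.mpr hc), eC_natCast, mul_zero,
      Nat.cast_zero (R := ℝ), zero_div, ← Nat.cast_zero (R := ℝ), eC_natCast,
      ZMod.natCast_self, Nat.cast_zero]
  rw [sum_filter_of_ne hcoprime, sum_Icc_one_eq_sum_range c hperiodic]
  simp_rw [conj_apply_natCast, ite_mul, zero_mul]
  rw [sum_range_ite_coprime hc]
  refine sum_congr rfl fun t ht => ?_
  have ht0 : (t : ℝ) ≠ 0 := Nat.cast_ne_zero.mpr (Nat.pos_of_mem_divisors ht).ne'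
  congr 1
  rw [twistedSum, mul_sum]
  refine sum_congr rfl fun m _ => ?_
  rw [Nat.cast_mul, map_mul, Nat.cast_div (Nat.dvd_of_mem_divisors ht) ht0]
  push_cast
  rw [div_div_eq_mul_div]
  ring_nf

lemma sum_div_le_card_divisors_mul_gcd {c N h : ℕ} (hc : c ≠ 0) (hN : N ≠ 0) (hh : h ≠ 0) :
    ∑ t ∈ c.divisors with t * N ∣ c ∧ c / (t * N) ∣ h, c / (t * N)
      ≤ #h.divisors * h.gcd c := by
  set s := {t ∈ c.divisors | t * N ∣ c ∧ c / (t * N) ∣ h}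
  have hle (t : ℕ) (ht : t ∈ s) : c / (t * N) ≤ h.gcd c :=
    Nat.le_of_dvd (Nat.gcd_pos_of_pos_left _ (Nat.pos_of_ne_zero hh))
      (Nat.dvd_gcd (mem_filter.mp ht).2.2 (Nat.div_dvd_of_dvd (mem_filter.mp ht).2.1))
  have hcard : #s ≤ #h.divisors := by
    refine card_le_card_of_injOn (fun t => c / (t * N)) (fun t ht => ?_)
      (fun t₁ ht₁ t₂ ht₂ he => ?_)
    · exact Nat.mem_divisors.mpr ⟨(mem_filter.mp ht).2.2, hh⟩
    · have h₁ := Nat.div_div_self (mem_filter.mp ht₁).2.1 hc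
      have h₂ := Nat.div_div_self (mem_filter.mp ht₂).2.1 hc
      simp only at he
      exact Nat.eq_of_mul_eq_mul_right (Nat.pos_of_ne_zero hN) (h₁.symm.trans (he ▸ h₂))
  calc ∑ t ∈ s, c / (t * N) ≤ #s * h.gcd c := by simpa using sum_le_card_nsmul s _ _ hle
    _ ≤ #h.divisors * h.gcd c := Nat.mul_le_mul_right _ hcard

/-- Bound for the incomplete Gauss sum: for a Dirichlet character `χ` mod `c` with
conductor `c⋆` and a positive integer `h`,
`|∑_{d mod c, (d,c)=1} conj(χ(d)) e(h d / c)| ≤ (c⋆)^{1/2} τ(h) (h,c)`. -/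
theorem stmt9 (c : ℕ) (hc : 0 < c) (χ : DirichletCharacter ℂ c) (h : ℕ) (hh : 0 < h) :
    ‖∑ d ∈ (Finset.Icc 1 c).filter (fun d => Nat.Coprime d c),
        (starRingEnd ℂ) (χ ((d : ZMod c))) * eC (((h * d : ℕ) : ℝ) / c)‖
      ≤ Real.sqrt (χ.conductor) * (h.divisors.card : ℝ) * (Nat.gcd h c : ℝ) := by
  have : NeZero c := ⟨hc.ne'⟩
  set N := χ.conductor
  have : NeZero N := ⟨conductor_ne_zero χ⟩
  set ψ := χ.primitiveCharacter⁻¹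
  have hψ : ψ.IsPrimitive := by
    rw [isPrimitive_def, conductor_inv]
    exact χ.primitiveCharacter_isPrimitive
  rw [sum_coprime_conj_mul_eC hc.ne']
  calc _ ≤ ∑ t ∈ c.divisors, ‖ψ t * twistedSum ψ (c / t) h‖ := by
        refine norm_sum_le_of_le _ fun t _ => ?_
        rw [norm_mul, Complex.norm_intCast]
        exact mul_le_of_le_one_left (norm_nonneg _) (by exact_mod_cast abs_moebius_le_one)
    _ ≤ ∑ t ∈ c.divisors,
          if t * N ∣ c ∧ c / (t * N) ∣ h then (c / (t * N) : ℕ) * √N else 0 :=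
        sum_le_sum fun t ht => norm_apply_mul_twistedSum_div_le hψ χ.conductor_dvd_level ht h
    _ = ((∑ t ∈ c.divisors with t * N ∣ c ∧ c / (t * N) ∣ h, c / (t * N) : ℕ) : ℝ)
          * √N := by
        rw [← sum_filter, Nat.cast_sum, sum_mul]
    _ ≤ ((#h.divisors * h.gcd c : ℕ) : ℝ) * √N := by
        gcongr
        exact sum_div_le_card_divisors_mul_gcd hc.ne' (NeZero.ne _) hh.ne'
    _ = _ := by
        push_cast
        ring
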